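/- arXiv:math/0412096 — 2 statements merged into one kernel-verified Lean document; each statement's English description precedes it below -/
import Mathlib

section
/- Let r be a smooth real function near 0 in ℂⁿ of the form r(Z) = z + z̄ + O(|Z|²) in coordinates Z = (z, w₁,…,w_{n−1}), and let J be an almost complex structure with J(0) = J_st. Then the Levi form of r² at 0 with respect to J satisfies L^J_0(r²)(v) = |v₁|² for all v ∈ H_0^J({r=0}) = {z = 0}, and consequently if L^J_0(r) is strictly positive definite on H_0^J({r=0}), then for sufficiently large C > 0 the Levi form L^J_0(r + Cr²) is strictly positive definite on all of T_0(ℂⁿ). -/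
noncomputable section
open Complex Metric
open Complex Metric

def Jstd (n : ℕ) : (Fin n → ℂ) →L[ℝ] (Fin n → ℂ) :=
  Complex.I • ContinuousLinearMap.id ℝ (Fin n → ℂ)

def mulI : ℂ →L[ℝ] ℂ := Complex.I • ContinuousLinearMap.id ℝ ℂ

/-- The 1-form `J^* du : v ↦ du(Jv)`. -/
def oneForm {n : ℕ} (J : (Fin n → ℂ) → ((Fin n → ℂ) →L[ℝ] (Fin n → ℂ)))
    (u : (Fin n → ℂ) → ℝ) (Z : Fin n → ℂ) : (Fin n → ℂ) →L[ℝ] ℝ :=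
  (fderiv ℝ u Z).comp (J Z)

/-- Levi form `L^J(u)(p)(v) = -d(J^* du)(X, JX)(p)` computed with the constant
vector field `X ≡ v` and `JX : Z ↦ J(Z)v`, using
`dω(X,Y) = X(ω(Y)) - Y(ω(X)) - ω([X,Y])`. -/
def leviForm {n : ℕ} (J : (Fin n → ℂ) → ((Fin n → ℂ) →L[ℝ] (Fin n → ℂ)))
    (u : (Fin n → ℂ) → ℝ) (p v : Fin n → ℂ) : ℝ :=
  -(fderiv ℝ (fun Z => oneForm J u Z (J Z v)) p v
    - fderiv ℝ (fun Z => oneForm J u Z v) p (J p v)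
    - oneForm J u p (fderiv ℝ (fun Z => J Z v) p v))

/-- A `J`-holomorphic disc: a smooth map of the unit disc with `df ∘ J_st = J ∘ df`. -/
def JHoloDisc {n : ℕ} (J : (Fin n → ℂ) → ((Fin n → ℂ) →L[ℝ] (Fin n → ℂ)))
    (f : ℂ → Fin n → ℂ) : Prop :=
  ContDiffOn ℝ (⊤ : ℕ∞) f (ball (0:ℂ) 1) ∧ ∀ ζ ∈ ball (0:ℂ) 1,
    (fderiv ℝ f ζ).comp mulI = (J (f ζ)).comp (fderiv ℝ f ζ)


section Aux
variable {n : ℕ} {J : (Fin n → ℂ) → ((Fin n → ℂ) →L[ℝ] (Fin n → ℂ))}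

lemma leviForm_eq (hACS : ∀ Z, (J Z).comp (J Z) = -ContinuousLinearMap.id ℝ (Fin n → ℂ))
    (u : (Fin n → ℂ) → ℝ) (v : Fin n → ℂ) :
    leviForm J u 0 v =
      fderiv ℝ (fun Z => fderiv ℝ u Z v) 0 v
      + fderiv ℝ (fun Z => fderiv ℝ u Z (J Z v)) 0 (J 0 v)
      + fderiv ℝ u 0 (J 0 (fderiv ℝ (fun Z => J Z v) 0 v)) := by
  have h1 : (fun Z => (fderiv ℝ u Z) ((J Z) ((J Z) v))) = fun Z => -((fderiv ℝ u Z) v) := by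
    funext Z
    have h := congrArg (fun T : (Fin n → ℂ) →L[ℝ] (Fin n → ℂ) => fderiv ℝ u Z (T v)) (hACS Z)
    simpa using h
  simp only [leviForm, oneForm, ContinuousLinearMap.comp_apply]
  rw [h1, fderiv_fun_neg]
  simp only [ContinuousLinearMap.neg_apply]
  ring


variable {r : (Fin n → ℂ) → ℝ}

lemma fderiv_sq' (hr : ContDiff ℝ (⊤ : ℕ∞) r) (Z : Fin n → ℂ) :
    fderiv ℝ (fun W => (r W)^2) Z = (2 * r Z) • fderiv ℝ r Z := by
  have h : (fun W => (r W)^2) = fun W => r W * r W := by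
    funext W; ring
  rw [h, fderiv_fun_mul (hr.differentiable (by simp) Z) (hr.differentiable (by simp) Z)]
  rw [two_mul, add_smul]

lemma diffA (hr : ContDiff ℝ (⊤ : ℕ∞) r) (w : Fin n → ℂ) :
    DifferentiableAt ℝ (fun Z => fderiv ℝ r Z w) 0 :=
  (((hr.fderiv_right (m := (⊤ : ℕ∞)) (by simp)).differentiable (by simp)) 0).clm_apply (differentiableAt_const w)

lemma diffB (hJs : ContDiff ℝ (⊤ : ℕ∞) J) (hr : ContDiff ℝ (⊤ : ℕ∞) r) (w : Fin n → ℂ) :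
    DifferentiableAt ℝ (fun Z => fderiv ℝ r Z (J Z w)) 0 :=
  (((hr.fderiv_right (m := (⊤ : ℕ∞)) (by simp)).differentiable (by simp)) 0).clm_apply
    (((hJs.differentiable (by simp)) 0).clm_apply (differentiableAt_const w))

lemma levi_sq (hJs : ContDiff ℝ (⊤ : ℕ∞) J)
    (hACS : ∀ Z, (J Z).comp (J Z) = -ContinuousLinearMap.id ℝ (Fin n → ℂ))
    (hr : ContDiff ℝ (⊤ : ℕ∞) r) (hr0 : r 0 = 0) (v : Fin n → ℂ) :
    leviForm J (fun Z => (r Z)^2) 0 v =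
      2 * (fderiv ℝ r 0 v)^2 + 2 * (fderiv ℝ r 0 (J 0 v))^2 := by
  rw [leviForm_eq hACS]
  have hs1 : (fun Z => fderiv ℝ (fun W => (r W)^2) Z v)
      = fun Z => (2 * r Z) * (fderiv ℝ r Z v) := by
    funext Z; rw [fderiv_sq' hr]; simp
  have hs2 : (fun Z => fderiv ℝ (fun W => (r W)^2) Z (J Z v))
      = fun Z => (2 * r Z) * (fderiv ℝ r Z (J Z v)) := by
    funext Z; rw [fderiv_sq' hr]; simp
  have hc : DifferentiableAt ℝ (fun Z => 2 * r Z) 0 :=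
    (hr.differentiable (by simp) 0).const_mul 2
  have h2r : fderiv ℝ (fun Z => 2 * r Z) 0 = (2:ℝ) • fderiv ℝ r 0 :=
    fderiv_const_mul (hr.differentiable (by simp) 0) 2
  rw [hs1, hs2, fderiv_fun_mul hc (diffA hr v), fderiv_fun_mul hc (diffB hJs hr v),
    fderiv_sq' hr]
  simp only [ContinuousLinearMap.add_apply, ContinuousLinearMap.smul_apply,
    smul_eq_mul, h2r, hr0]
  ring

lemma levi_lin (hJs : ContDiff ℝ (⊤ : ℕ∞) J)
    (hACS : ∀ Z, (J Z).comp (J Z) = -ContinuousLinearMap.id ℝ (Fin n → ℂ))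
    {u1 u2 : (Fin n → ℂ) → ℝ} (h1 : ContDiff ℝ (⊤ : ℕ∞) u1) (h2 : ContDiff ℝ (⊤ : ℕ∞) u2)
    (a : ℝ) (v : Fin n → ℂ) :
    leviForm J (fun Z => u1 Z + a * u2 Z) 0 v
      = leviForm J u1 0 v + a * leviForm J u2 0 v := by
  rw [leviForm_eq hACS, leviForm_eq hACS, leviForm_eq hACS]
  have hD : ∀ Z, fderiv ℝ (fun W => u1 W + a * u2 W) Z
      = fderiv ℝ u1 Z + a • fderiv ℝ u2 Z := by
    intro Z
    rw [fderiv_fun_add (h1.differentiable (by simp) Z)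
      ((h2.differentiable (by simp) Z).const_mul a),
      fderiv_const_mul (h2.differentiable (by simp) Z) a]
  have e1 : (fun Z => fderiv ℝ (fun W => u1 W + a * u2 W) Z v)
      = fun Z => fderiv ℝ u1 Z v + a * fderiv ℝ u2 Z v := by
    funext Z; rw [hD]; simp
  have e2 : (fun Z => fderiv ℝ (fun W => u1 W + a * u2 W) Z (J Z v))
      = fun Z => fderiv ℝ u1 Z (J Z v) + a * fderiv ℝ u2 Z (J Z v) := by
    funext Z; rw [hD]; simp
  rw [e1, e2, fderiv_fun_add (diffA h1 v) ((diffA h2 v).const_mul a),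
    fderiv_fun_add (diffB hJs h1 v) ((diffB hJs h2 v).const_mul a),
    fderiv_const_mul (diffA h2 v) a, fderiv_const_mul (diffB hJs h2 v) a, hD]
  simp only [ContinuousLinearMap.add_apply, ContinuousLinearMap.smul_apply, smul_eq_mul]
  ring


lemma levi_formula (hJs : ContDiff ℝ (⊤ : ℕ∞) J)
    (hACS : ∀ Z, (J Z).comp (J Z) = -ContinuousLinearMap.id ℝ (Fin n → ℂ))
    (hr : ContDiff ℝ (⊤ : ℕ∞) r) (v : Fin n → ℂ) :
    leviForm J r 0 v =
      (fderiv ℝ (fderiv ℝ r) 0 v) v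
      + (fderiv ℝ r 0 ((fderiv ℝ J 0 (J 0 v)) v)
          + (fderiv ℝ (fderiv ℝ r) 0 (J 0 v)) (J 0 v))
      + fderiv ℝ r 0 (J 0 ((fderiv ℝ J 0 v) v)) := by
  rw [leviForm_eq hACS]
  have hc : DifferentiableAt ℝ (fderiv ℝ r) (0 : Fin n → ℂ) :=
    ((hr.fderiv_right (m := (⊤ : ℕ∞)) (by simp)).differentiable (by simp)) 0
  have hJd : DifferentiableAt ℝ J (0 : Fin n → ℂ) := (hJs.differentiable (by simp)) 0
  have hJv : fderiv ℝ (fun Z => J Z v) 0 = (fderiv ℝ J 0).flip v := by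
    have h := fderiv_clm_apply (c := J) (u := fun _ => v) (x := (0 : Fin n → ℂ))
      hJd (differentiableAt_const v)
    simpa using h
  have hT1 : fderiv ℝ (fun Z => fderiv ℝ r Z v) 0
      = (fderiv ℝ (fderiv ℝ r) 0).flip v := by
    have h := fderiv_clm_apply (c := fderiv ℝ r) (u := fun _ => v) (x := (0 : Fin n → ℂ))
      hc (differentiableAt_const v)
    simpa using h
  have hT2 : fderiv ℝ (fun Z => fderiv ℝ r Z (J Z v)) 0
      = (fderiv ℝ r 0).comp ((fderiv ℝ J 0).flip v)
        + (fderiv ℝ (fderiv ℝ r) 0).flip (J 0 v) := by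
    have h := fderiv_clm_apply (c := fderiv ℝ r) (u := fun Z => J Z v) (x := (0 : Fin n → ℂ))
      hc (hJd.clm_apply (differentiableAt_const v))
    rw [hJv] at h
    exact h
  rw [hT1, hT2, hJv]
  simp [ContinuousLinearMap.flip_apply, ContinuousLinearMap.add_apply,
    ContinuousLinearMap.comp_apply]

lemma levi_cont (hJs : ContDiff ℝ (⊤ : ℕ∞) J)
    (hACS : ∀ Z, (J Z).comp (J Z) = -ContinuousLinearMap.id ℝ (Fin n → ℂ))
    (hr : ContDiff ℝ (⊤ : ℕ∞) r) :
    Continuous (fun v => leviForm J r 0 v) := by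
  have h : (fun v => leviForm J r 0 v) = fun v =>
      (fderiv ℝ (fderiv ℝ r) 0 v) v
      + (fderiv ℝ r 0 ((fderiv ℝ J 0 (J 0 v)) v)
          + (fderiv ℝ (fderiv ℝ r) 0 (J 0 v)) (J 0 v))
      + fderiv ℝ r 0 (J 0 ((fderiv ℝ J 0 v) v)) :=
    funext (levi_formula hJs hACS hr)
  rw [h]
  fun_prop

lemma levi_homog (hJs : ContDiff ℝ (⊤ : ℕ∞) J)
    (hACS : ∀ Z, (J Z).comp (J Z) = -ContinuousLinearMap.id ℝ (Fin n → ℂ))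
    (hr : ContDiff ℝ (⊤ : ℕ∞) r) (c : ℝ) (v : Fin n → ℂ) :
    leviForm J r 0 (c • v) = c^2 * leviForm J r 0 v := by
  rw [levi_formula hJs hACS hr, levi_formula hJs hACS hr]
  simp only [map_smul, ContinuousLinearMap.smul_apply, smul_eq_mul]
  ring

end Aux

/-- for `r(Z) = z + z̄ + O(|Z|²)` (`z` the first coordinate) and `J` with
`J(0) = J_st`: the holomorphic tangent space `H_0^J({r=0})` is `{z = 0}`, on it
`L^J_0(r²)(v) = |v₁|²`, and if `L^J_0(r)` is strictly positive definite on
`H_0^J({r=0})` then `L^J_0(r + Cr²)` is strictly positive definite on all of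
`T_0(ℂⁿ)` for all sufficiently large `C > 0`. -/
theorem stmt_5 (n : ℕ) (hn : 0 < n)
    (J : (Fin n → ℂ) → ((Fin n → ℂ) →L[ℝ] (Fin n → ℂ)))
    (hJs : ContDiff ℝ (⊤ : ℕ∞) J)
    (hACS : ∀ Z, (J Z).comp (J Z) = -ContinuousLinearMap.id ℝ (Fin n → ℂ))
    (hJ0 : J 0 = Jstd n)
    (r : (Fin n → ℂ) → ℝ) (hr : ContDiff ℝ (⊤ : ℕ∞) r)
    (hr0 : r 0 = 0)
    (hdr : ∀ v : Fin n → ℂ, fderiv ℝ r 0 v = 2 * (v ⟨0, hn⟩).re) :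
    ({v : Fin n → ℂ | fderiv ℝ r 0 v = 0 ∧ fderiv ℝ r 0 (J 0 v) = 0}
        = {v : Fin n → ℂ | v ⟨0, hn⟩ = 0}) ∧
    (∀ v : Fin n → ℂ, v ⟨0, hn⟩ = 0 →
        leviForm J (fun Z => (r Z)^2) 0 v = ‖v ⟨0, hn⟩‖ ^ 2) ∧
    ((∀ v : Fin n → ℂ, v ≠ 0 → v ⟨0, hn⟩ = 0 → 0 < leviForm J r 0 v) →
      ∃ C₀ > 0, ∀ C ≥ C₀, ∀ v : Fin n → ℂ, v ≠ 0 →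
        0 < leviForm J (fun Z => r Z + C * (r Z)^2) 0 v) := by
  set e : Fin n := ⟨0, hn⟩ with he
  refine ⟨?_, ?_, ?_⟩
  · ext v
    simp only [Set.mem_setOf_eq, hdr, hJ0, Jstd, ContinuousLinearMap.smul_apply,
      ContinuousLinearMap.id_apply, Pi.smul_apply, smul_eq_mul, Complex.mul_re,
      Complex.I_re, Complex.I_im, Complex.ext_iff, Complex.zero_re, Complex.zero_im]
    constructor
    · rintro ⟨h1, h2⟩
      constructor <;> nlinarith
    · rintro ⟨h1, h2⟩
      constructor <;> nlinarith
  · intro v hv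
    rw [levi_sq hJs hACS hr hr0 v]
    simp only [hdr, hJ0, Jstd, ContinuousLinearMap.smul_apply,
      ContinuousLinearMap.id_apply, Pi.smul_apply, smul_eq_mul, ← he, hv]
    simp
  · intro hpos
    set Q : (Fin n → ℂ) → ℝ := fun v => leviForm J r 0 v with hQ
    set P : (Fin n → ℂ) → ℝ := fun v => 8 * ((v e).re ^ 2 + (v e).im ^ 2) with hP
    have hsq : ContDiff ℝ (⊤ : ℕ∞) (fun Z => (r Z) ^ 2) := hr.pow 2
    have hLC : ∀ (C : ℝ) (v : Fin n → ℂ),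
        leviForm J (fun Z => r Z + C * (r Z) ^ 2) 0 v = Q v + C * P v := by
      intro C v
      rw [levi_lin hJs hACS hr hsq C v, levi_sq hJs hACS hr hr0 v]
      simp only [hdr, hJ0, Jstd, ContinuousLinearMap.smul_apply,
        ContinuousLinearMap.id_apply, Pi.smul_apply, smul_eq_mul, Complex.mul_re,
        Complex.I_re, Complex.I_im, hQ, hP, ← he]
      ring
    have hPnn : ∀ v, 0 ≤ P v := by
      intro v; simp only [hP]; positivity
    have hPpos : ∀ v : Fin n → ℂ, v e ≠ 0 → 0 < P v := by
      intro v hv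
      have h := Complex.normSq_pos.mpr hv
      rw [Complex.normSq_apply] at h
      simp only [hP]; nlinarith
    have hQc : Continuous Q := levi_cont hJs hACS hr
    have hPc : Continuous P := by
      apply continuous_const.mul
      exact ((Complex.continuous_re.comp (continuous_apply e)).pow 2).add
        ((Complex.continuous_im.comp (continuous_apply e)).pow 2)
    set S : Set (Fin n → ℂ) := Metric.sphere 0 1 with hS
    have hScomp : IsCompact S := isCompact_sphere 0 1
    obtain ⟨C₀, hC₀pos, hSkey⟩ :
        ∃ C₀ > (0:ℝ), ∀ C ≥ C₀, ∀ w ∈ S, 0 < Q w + C * P w := by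
      have hSv : ∀ w ∈ S, w ≠ 0 := by
        intro w hw
        rw [hS] at hw
        have : ‖w‖ = 1 := by simpa using hw
        intro h0; rw [h0] at this; simp at this
      by_cases hK : (S ∩ {w | Q w ≤ 0}).Nonempty
      · have hKcomp : IsCompact (S ∩ {w | Q w ≤ 0}) :=
          hScomp.inter_right (isClosed_le hQc continuous_const)
        obtain ⟨vP, hvP, hvPmin⟩ := hKcomp.exists_isMinOn hK hPc.continuousOn
        obtain ⟨vQ, hvQ, hvQmin⟩ := hScomp.exists_isMinOn ⟨vP, hvP.1⟩ hQc.continuousOn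
        have hδ : 0 < P vP := by
          apply hPpos
          intro h0
          have := hpos vP (hSv vP hvP.1) h0
          have h2 := hvP.2
          simp only [Set.mem_setOf_eq] at h2
          linarith
        refine ⟨max 1 ((1 - Q vQ) / P vP), lt_of_lt_of_le one_pos (le_max_left _ _), ?_⟩
        intro C hC w hw
        have hCpos : (0:ℝ) < C := lt_of_lt_of_le one_pos (le_trans (le_max_left _ _) hC)
        by_cases hq : 0 < Q w
        · nlinarith [hPnn w]
        · push_neg at hq
          have hwK : w ∈ S ∩ {w | Q w ≤ 0} := ⟨hw, hq⟩
          have h1 : P vP ≤ P w := hvPmin hwK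
          have h2 : Q vQ ≤ Q w := hvQmin hw
          have h3 : (1 - Q vQ) / P vP ≤ C := le_trans (le_max_right _ _) hC
          have h4 : 1 - Q vQ ≤ C * P vP := by
            rw [div_le_iff₀ hδ] at h3; linarith
          nlinarith [hPnn w]
      · refine ⟨1, one_pos, ?_⟩
        intro C hC w hw
        have hq : 0 < Q w := by
          by_contra h
          push_neg at h
          exact hK ⟨w, hw, h⟩
        nlinarith [hPnn w, hPpos w]
    refine ⟨C₀, hC₀pos, ?_⟩
    intro C hC v hv
    rw [hLC C v]
    have hnv : (0:ℝ) < ‖v‖ := norm_pos_iff.mpr hv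
    set u : Fin n → ℂ := ‖v‖⁻¹ • v with hu
    have huS : u ∈ S := by
      simp only [hS, mem_sphere_iff_norm, sub_zero, hu, norm_smul, norm_inv, norm_norm]
      field_simp
    have hvu : v = ‖v‖ • u := by
      rw [hu, smul_smul, mul_inv_cancel₀ (ne_of_gt hnv), one_smul]
    have hQv : Q v = ‖v‖ ^ 2 * Q u := by
      rw [hQ]
      conv_lhs => rw [hvu]
      exact levi_homog hJs hACS hr _ _
    have hPv : P v = ‖v‖ ^ 2 * P u := by
      simp only [hP]
      conv_lhs => rw [hvu]
      simp only [Pi.smul_apply, Complex.smul_re, Complex.smul_im, smul_eq_mul]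
      ring
    have hkey := hSkey C hC u huS
    rw [hQv, hPv]
    have h2 : 0 < ‖v‖ ^ 2 := by positivity
    calc (0:ℝ) < ‖v‖ ^ 2 * (Q u + C * P u) := mul_pos h2 hkey
      _ = ‖v‖ ^ 2 * Q u + C * (‖v‖ ^ 2 * P u) := by ring
end
end

section
/- Let Γ = {r = 0} with r smooth on a neighborhood Ω of 0 in ℂⁿ, and assume the Levi form L^J_Z(r) vanishes on H_Z^J(Γ) for all Z ∈ Γ. Then for points Z on the perturbed hypersurfaces Γ_ε = {r + ε|Z|² − ε/N = 0} inside a small ball, the Levi form of r on the holomorphic tangent spaces satisfies the estimate |L_Z^J(r)(v)| ≤ c₁(d₁ + d₂)‖v‖², where d₁ = dist(Z, Γ) and d₂ is the distance between H_Z^J(Γ_ε) and H_{Z₀}^J(Γ) in the Grassmannian, Z₀ the nearest point of Γ to Z, and c₁ is independent of ε and N. -/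
noncomputable section
open Complex Metric
open Complex Metric

/-- The holomorphic tangent space `H_Z^J({ρ = 0}) = ker ∂_J ρ(Z)`. -/
def Hspace {n : ℕ} (J : (Fin n → ℂ) → ((Fin n → ℂ) →L[ℝ] (Fin n → ℂ)))
    (ρ : (Fin n → ℂ) → ℝ) (Z : Fin n → ℂ) : Set (Fin n → ℂ) :=
  {v | fderiv ℝ ρ Z v = 0 ∧ fderiv ℝ ρ Z (J Z v) = 0}


section Aux

variable {n : ℕ} {J : (Fin n → ℂ) → ((Fin n → ℂ) →L[ℝ] (Fin n → ℂ))}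
  {r : (Fin n → ℂ) → ℝ}

lemma oneForm_contDiff (hJ : ContDiff ℝ (⊤ : ℕ∞) J) (hr : ContDiff ℝ (⊤ : ℕ∞) r) :
    ContDiff ℝ (⊤ : ℕ∞) (oneForm J r) :=
  (hr.fderiv_right le_rfl).clm_comp hJ

lemma leviForm_eq_s12 (hJ : ContDiff ℝ (⊤ : ℕ∞) J) (hr : ContDiff ℝ (⊤ : ℕ∞) r) (p v : Fin n → ℂ) :
    leviForm J r p v
      = fderiv ℝ (oneForm J r) p (J p v) v - fderiv ℝ (oneForm J r) p v (J p v) := by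
  have hM := oneForm_contDiff hJ hr
  have hMd : DifferentiableAt ℝ (oneForm J r) p := (hM.differentiable (by simp)) p
  have hJd : DifferentiableAt ℝ J p := (hJ.differentiable (by simp)) p
  have hJv : DifferentiableAt ℝ (fun Z => J Z v) p :=
    hJd.clm_apply (differentiableAt_const v)
  have h1 : fderiv ℝ (fun Z => oneForm J r Z (J Z v)) p
      = (oneForm J r p).comp (fderiv ℝ (fun Z => J Z v) p)
        + (fderiv ℝ (oneForm J r) p).flip (J p v) :=
    fderiv_clm_apply hMd hJv
  have h2 : fderiv ℝ (fun Z => oneForm J r Z v) p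
      = (oneForm J r p).comp (fderiv ℝ (fun _ : Fin n → ℂ => v) p)
        + (fderiv ℝ (oneForm J r) p).flip v :=
    fderiv_clm_apply hMd (differentiableAt_const v)
  rw [leviForm, h1, h2]
  simp only [fderiv_const, fderiv_fun_const, Pi.zero_apply, ContinuousLinearMap.comp_zero,
    ContinuousLinearMap.add_apply, ContinuousLinearMap.comp_apply,
    ContinuousLinearMap.flip_apply, ContinuousLinearMap.zero_apply, zero_add]
  ring

lemma leviForm_contDiff (hJ : ContDiff ℝ (⊤ : ℕ∞) J) (hr : ContDiff ℝ (⊤ : ℕ∞) r) :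
    ContDiff ℝ (⊤ : ℕ∞) (fun q : (Fin n → ℂ) × (Fin n → ℂ) => leviForm J r q.1 q.2) := by
  have heq : (fun q : (Fin n → ℂ) × (Fin n → ℂ) => leviForm J r q.1 q.2)
      = fun q => fderiv ℝ (oneForm J r) q.1 (J q.1 q.2) q.2
          - fderiv ℝ (oneForm J r) q.1 q.2 (J q.1 q.2) :=
    funext fun q => leviForm_eq_s12 hJ hr q.1 q.2
  rw [heq]
  have hD : ContDiff ℝ (⊤ : ℕ∞) (fderiv ℝ (oneForm J r)) :=
    (oneForm_contDiff hJ hr).fderiv_right le_rfl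
  have hDq : ContDiff ℝ (⊤ : ℕ∞) fun q : (Fin n → ℂ) × (Fin n → ℂ) => fderiv ℝ (oneForm J r) q.1 :=
    hD.comp contDiff_fst
  have hJq : ContDiff ℝ (⊤ : ℕ∞) fun q : (Fin n → ℂ) × (Fin n → ℂ) => J q.1 q.2 :=
    (hJ.comp contDiff_fst).clm_apply contDiff_snd
  exact ((hDq.clm_apply hJq).clm_apply contDiff_snd).sub
    ((hDq.clm_apply contDiff_snd).clm_apply hJq)

lemma leviForm_smul (hJ : ContDiff ℝ (⊤ : ℕ∞) J) (hr : ContDiff ℝ (⊤ : ℕ∞) r) (p u : Fin n → ℂ) (t : ℝ) :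
    leviForm J r p (t • u) = t ^ 2 * leviForm J r p u := by
  rw [leviForm_eq_s12 hJ hr, leviForm_eq_s12 hJ hr]
  simp only [map_smul, ContinuousLinearMap.smul_apply, smul_eq_mul]
  ring

lemma leviForm_zero (hJ : ContDiff ℝ (⊤ : ℕ∞) J) (hr : ContDiff ℝ (⊤ : ℕ∞) r) (p : Fin n → ℂ) :
    leviForm J r p 0 = 0 := by
  have := leviForm_smul hJ hr p 0 0
  simpa using this

end Aux

lemma clm_eq_zero_of_acs {E : Type*} [NormedAddCommGroup E] [NormedSpace ℝ E]
    [FiniteDimensional ℝ E] (hfr : Module.finrank ℝ E = 2)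
    (T : E →L[ℝ] E) (hT : T.comp T = -ContinuousLinearMap.id ℝ E)
    (ℓ : E →L[ℝ] ℝ) (v : E) (hv : v ≠ 0) (h1 : ℓ v = 0) (h2 : ℓ (T v) = 0) : ℓ = 0 := by
  have hTT : ∀ w, T (T w) = -w := by
    intro w
    have := ContinuousLinearMap.ext_iff.1 hT w
    simpa using this
  have hli : LinearIndependent ℝ ![v, T v] := by
    rw [LinearIndependent.pair_iff]
    intro a b hab
    have hab2 : a • T v + b • -v = 0 := by
      have := congrArg T hab
      simpa [map_add, map_smul, hTT] using this
    have h3 : (a * a + b * b) • v = 0 := by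
      have e1 : (a * b) • T v = - ((a*a) • v) := by
        have := congrArg (fun w => a • w) hab
        simp only [smul_add, smul_smul, smul_zero] at this
        rw [add_comm] at this
        rw [mul_comm a b]
        linear_combination (norm := module) this
      have e2 : (a * b) • T v = (b*b) • v := by
        have := congrArg (fun w => b • w) hab2
        simp only [smul_add, smul_smul, smul_neg, smul_zero] at this
        rw [mul_comm b a] at this
        linear_combination (norm := module) this
      have h5 : -((a*a) • v) = (b*b) • v := e1.symm.trans e2
      rw [add_smul, ← h5]
      simp
    have h4 : a * a + b * b = 0 := by
      by_contra h
      exact hv (by simpa [smul_eq_zero, h] using h3)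
    constructor <;> nlinarith
  have hspan : Submodule.span ℝ (Set.range ![v, T v]) = ⊤ :=
    hli.span_eq_top_of_card_eq_finrank (by simp [hfr])
  have hzero : (ℓ : E →ₗ[ℝ] ℝ) = (0 : E →ₗ[ℝ] ℝ) := by
    apply LinearMap.ext_on hspan
    intro x hx
    rcases hx with ⟨i, rfl⟩
    fin_cases i <;> simp [h1, h2]
  ext w
  exact DFunLike.congr_fun hzero w

lemma exists_unit_common_ker {E : Type*} [NormedAddCommGroup E] [NormedSpace ℝ E]
    [FiniteDimensional ℝ E] (hfr : 3 ≤ Module.finrank ℝ E) (ℓ₁ ℓ₂ : E →L[ℝ] ℝ) :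
    ∃ u : E, ‖u‖ = 1 ∧ ℓ₁ u = 0 ∧ ℓ₂ u = 0 := by
  set φ : E →ₗ[ℝ] ℝ × ℝ := LinearMap.prod ℓ₁.toLinearMap ℓ₂.toLinearMap with hφ
  have h := LinearMap.finrank_range_add_finrank_ker φ
  have hr2 : Module.finrank ℝ (LinearMap.range φ) ≤ 2 := by
    have := Submodule.finrank_le (LinearMap.range φ)
    simpa [Module.finrank_prod] using this
  have hker : LinearMap.ker φ ≠ ⊥ := by
    intro hbot
    rw [hbot, finrank_bot] at h
    omega
  obtain ⟨x, hx, hx0⟩ := Submodule.exists_mem_ne_zero_of_ne_bot hker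
  have hxn : ‖x‖ ≠ 0 := norm_ne_zero_iff.2 hx0
  have hx1 : ℓ₁ x = 0 ∧ ℓ₂ x = 0 := by
    have h' := (LinearMap.mem_ker.1 hx)
    rw [hφ] at h'
    exact ⟨congrArg Prod.fst h', congrArg Prod.snd h'⟩
  refine ⟨‖x‖⁻¹ • x, ?_, ?_, ?_⟩
  · rw [norm_smul, norm_inv, norm_norm, inv_mul_cancel₀ hxn]
  · rw [map_smul, hx1.1]; simp
  · rw [map_smul, hx1.2]; simp


lemma sq_norm_fderiv (Z : Fin 1 → ℂ) :
    ∃ D : (Fin 1 → ℂ) →L[ℝ] ℝ,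
      HasFDerivAt (fun W : Fin 1 → ℂ => ‖W‖^2) D Z ∧ ‖D‖ ≤ 4 * ‖Z‖ := by
  have hnorm1 : ∀ W : Fin 1 → ℂ, ‖W‖ = ‖W 0‖ := by
    intro W
    refine le_antisymm ?_ (norm_le_pi_norm W 0)
    rw [pi_norm_le_iff_of_nonneg (norm_nonneg _)]
    intro i
    rw [Subsingleton.elim i 0]
  set P : (Fin 1 → ℂ) →L[ℝ] ℂ := ContinuousLinearMap.proj 0 with hPdef
  refine ⟨(2*(Z 0).re) • (Complex.reCLM.comp P) + (2*(Z 0).im) • (Complex.imCLM.comp P),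
    ?_, ?_⟩
  · have hfun : (fun W : Fin 1 → ℂ => ‖W‖^2)
        = fun W => (W 0).re * (W 0).re + (W 0).im * (W 0).im := by
      funext W
      rw [hnorm1 W, Complex.sq_norm, Complex.normSq_apply]
    rw [hfun]
    have h1 : HasFDerivAt (fun W : Fin 1 → ℂ => (W 0).re) (Complex.reCLM.comp P) Z :=
      (Complex.reCLM.comp P).hasFDerivAt
    have h2 : HasFDerivAt (fun W : Fin 1 → ℂ => (W 0).im) (Complex.imCLM.comp P) Z :=
      (Complex.imCLM.comp P).hasFDerivAt
    have h3 := (h1.mul h1).add (h2.mul h2)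
    refine (h3 : HasFDerivAt (fun W : Fin 1 → ℂ => (W 0).re * (W 0).re + (W 0).im * (W 0).im)
      _ Z).congr_fderiv ?_
    module
  · have hre : ‖Complex.reCLM.comp P‖ ≤ 1 := by
      refine ContinuousLinearMap.opNorm_le_bound _ zero_le_one ?_
      intro w
      rw [one_mul]
      refine le_trans ?_ (norm_le_pi_norm w 0)
      simpa [hPdef] using Complex.abs_re_le_norm (w 0)
    have him : ‖Complex.imCLM.comp P‖ ≤ 1 := by
      refine ContinuousLinearMap.opNorm_le_bound _ zero_le_one ?_
      intro w
      rw [one_mul]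
      refine le_trans ?_ (norm_le_pi_norm w 0)
      simpa [hPdef] using Complex.abs_im_le_norm (w 0)
    have hzr : |(Z 0).re| ≤ ‖Z‖ := by
      rw [hnorm1 Z]
      simpa using Complex.abs_re_le_norm (Z 0)
    have hzi : |(Z 0).im| ≤ ‖Z‖ := by
      rw [hnorm1 Z]
      simpa using Complex.abs_im_le_norm (Z 0)
    have e1 : ‖(2*(Z 0).re) • (Complex.reCLM.comp P)‖ ≤ 2 * ‖Z‖ := by
      rw [norm_smul (2*(Z 0).re) (Complex.reCLM.comp P), Real.norm_eq_abs]
      have h2a : |2*(Z 0).re| = 2 * |(Z 0).re| := by rw [_root_.abs_mul]; norm_num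
      rw [h2a]
      calc 2 * |(Z 0).re| * ‖Complex.reCLM.comp P‖ ≤ 2 * ‖Z‖ * 1 := by
            apply mul_le_mul (by linarith) hre (norm_nonneg _) (by positivity)
        _ = 2 * ‖Z‖ := mul_one _
    have e2 : ‖(2*(Z 0).im) • (Complex.imCLM.comp P)‖ ≤ 2 * ‖Z‖ := by
      rw [norm_smul (2*(Z 0).im) (Complex.imCLM.comp P), Real.norm_eq_abs]
      have h2a : |2*(Z 0).im| = 2 * |(Z 0).im| := by rw [_root_.abs_mul]; norm_num
      rw [h2a]
      calc 2 * |(Z 0).im| * ‖Complex.imCLM.comp P‖ ≤ 2 * ‖Z‖ * 1 := by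
            apply mul_le_mul (by linarith) him (norm_nonneg _) (by positivity)
        _ = 2 * ‖Z‖ := mul_one _
    calc ‖(2*(Z 0).re) • (Complex.reCLM.comp P) + (2*(Z 0).im) • (Complex.imCLM.comp P)‖
        ≤ ‖(2*(Z 0).re) • (Complex.reCLM.comp P)‖
          + ‖(2*(Z 0).im) • (Complex.imCLM.comp P)‖ := norm_add_le _ _
      _ ≤ 2 * ‖Z‖ + 2 * ‖Z‖ := add_le_add e1 e2
      _ = 4 * ‖Z‖ := by ring

set_option maxHeartbeats 4000000 in
/-- for a Levi-flat hypersurface `Γ = {r = 0}` and the perturbed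
hypersurfaces `Γ_ε = {r + ε|Z|² − ε/N = 0}`, there is a constant `c₁ > 0`
(independent of `ε` and `N`) such that for `Z ∈ Γ_ε` in the ball of radius
`1/(2N)`, `Z₀` the nearest point of `Γ` to `Z`, and `v ∈ H_Z^J(Γ_ε)`, one has
`|L_Z^J(r)(v)| ≤ c₁(d₁ + d₂)‖v‖²`, where `d₁ = dist(Z,Γ)` and `d₂` is the
(Hausdorff) distance between the unit spheres of `H_Z^J(Γ_ε)` and `H_{Z₀}^J(Γ)`. -/
theorem stmt_12 (n : ℕ)
    (J : (Fin n → ℂ) → ((Fin n → ℂ) →L[ℝ] (Fin n → ℂ)))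
    (hJs : ContDiff ℝ (⊤ : ℕ∞) J)
    (hACS : ∀ Z, (J Z).comp (J Z) = -ContinuousLinearMap.id ℝ (Fin n → ℂ))
    (hJ0 : J 0 = Jstd n)
    (r : (Fin n → ℂ) → ℝ) (hr : ContDiff ℝ (⊤ : ℕ∞) r)
    (hreg : ∀ Z, r Z = 0 → fderiv ℝ r Z ≠ 0)
    (hLevi : ∀ Z, r Z = 0 → ∀ v ∈ Hspace J r Z, leviForm J r Z v = 0) :
    ∃ c₁ > 0, ∀ N : ℝ, 1 < N → ∀ ε : ℝ, 0 < ε →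
      ∀ Z ∈ ball (0 : Fin n → ℂ) (1/(2*N)),
        r Z + ε * ‖Z‖^2 - ε/N = 0 →
        ∀ Z₀, r Z₀ = 0 → ‖Z - Z₀‖ = Metric.infDist Z {W | r W = 0} →
          ∀ v ∈ Hspace J (fun W => r W + ε * ‖W‖^2 - ε/N) Z,
            |leviForm J r Z v| ≤
              c₁ * (Metric.infDist Z {W | r W = 0}
                + Metric.hausdorffDist
                    (Hspace J (fun W => r W + ε * ‖W‖^2 - ε/N) Z ∩ sphere 0 1)
                    (Hspace J r Z₀ ∩ sphere 0 1)) * ‖v‖^2 := by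
  classical
  by_cases hΓ : ∃ W : Fin n → ℂ, r W = 0
  case neg =>
    exact ⟨1, one_pos, fun N hN ε hε Z hZ hZeq Z₀ hZ₀ hdist v hv =>
      absurd ⟨Z₀, hZ₀⟩ hΓ⟩
  obtain ⟨W₁, hW₁⟩ := hΓ
  set R : ℝ := ‖W₁‖ + 2 with hRdef
  have hR2 : 2 ≤ R := le_add_of_nonneg_left (norm_nonneg _)
  have hFc : ContDiff ℝ (⊤ : ℕ∞) (fun q : (Fin n → ℂ) × (Fin n → ℂ) => leviForm J r q.1 q.2) :=
    leviForm_contDiff hJs hr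
  obtain ⟨M, hM⟩ := (isCompact_closedBall (0 : (Fin n → ℂ) × (Fin n → ℂ)) R)
    |>.exists_bound_of_continuousOn hFc.continuous.continuousOn
  obtain ⟨CL, hCL⟩ := (isCompact_closedBall (0 : (Fin n → ℂ) × (Fin n → ℂ)) R)
    |>.exists_bound_of_continuousOn (hFc.continuous_fderiv (by simp)).continuousOn
  have hM0 : 0 ≤ M := le_trans (norm_nonneg _) (hM 0 (mem_closedBall_self (by linarith)))
  have hlip : LipschitzOnWith (Real.toNNReal CL)
      (fun q : (Fin n → ℂ) × (Fin n → ℂ) => leviForm J r q.1 q.2) (closedBall 0 R) :=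
    (convex_closedBall _ _).lipschitzOnWith_of_nnnorm_fderiv_le
      (fun x _ => hFc.differentiable (by simp) x)
      (fun x hx => by
        rw [← NNReal.coe_le_coe, coe_nnnorm, Real.coe_toNNReal']
        exact le_max_of_le_left (hCL x hx))
  obtain ⟨Cr, hCr⟩ := (isCompact_closedBall (0 : Fin n → ℂ) R)
    |>.exists_bound_of_continuousOn (hr.continuous_fderiv (by simp)).continuousOn
  have hCr0 : 0 ≤ Cr := le_trans (norm_nonneg _) (hCr 0 (mem_closedBall_self (by linarith)))
  have hgc : ContDiff ℝ (⊤ : ℕ∞) (fderiv ℝ r) := hr.fderiv_right le_rfl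
  obtain ⟨C2, hC2⟩ := (isCompact_closedBall (0 : Fin n → ℂ) R)
    |>.exists_bound_of_continuousOn (hgc.continuous_fderiv (by simp)).continuousOn
  have hC20 : 0 ≤ C2 := le_trans (norm_nonneg _) (hC2 0 (mem_closedBall_self (by linarith)))
  have hSc : IsCompact ({W : Fin n → ℂ | r W = 0} ∩ closedBall 0 R) :=
    (isCompact_closedBall _ _).inter_left (isClosed_eq hr.continuous continuous_const)
  have hSne : ({W : Fin n → ℂ | r W = 0} ∩ closedBall 0 R).Nonempty :=
    ⟨W₁, hW₁, by rw [mem_closedBall_zero_iff]; linarith⟩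
  obtain ⟨W₂, hW₂S, hW₂min⟩ := hSc.exists_isMinOn hSne
    (hgc.continuous.norm.continuousOn :
      ContinuousOn (fun W => ‖fderiv ℝ r W‖) _)
  set δ : ℝ := ‖fderiv ℝ r W₂‖ with hδdef
  have hδ0 : 0 < δ := norm_pos_iff.2 (hreg W₂ hW₂S.1)
  refine ⟨(Real.toNNReal CL : ℝ) + M * ((8/3) * Cr + C2) / δ + 1, by positivity, ?_⟩
  set c₁ : ℝ := (Real.toNNReal CL : ℝ) + M * ((8/3) * Cr + C2) / δ + 1 with hc₁def
  have hc₁CL : (Real.toNNReal CL : ℝ) ≤ c₁ := by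
    rw [hc₁def]
    have : 0 ≤ M * ((8/3) * Cr + C2) / δ := by positivity
    linarith
  have hc₁M : M * ((8/3) * Cr + C2) / δ ≤ c₁ := by
    rw [hc₁def]
    have : (0:ℝ) ≤ (Real.toNNReal CL : ℝ) := NNReal.coe_nonneg _
    linarith
  have hc₁0 : 0 < c₁ := by rw [hc₁def]; positivity
  intro N hN ε hε Z hZb hZeq Z₀ hZ₀ hdist v hv
  set d₁ : ℝ := Metric.infDist Z {W | r W = 0} with hd₁def
  set d₂ : ℝ := Metric.hausdorffDist
      (Hspace J (fun W => r W + ε * ‖W‖^2 - ε/N) Z ∩ sphere 0 1)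
      (Hspace J r Z₀ ∩ sphere 0 1) with hd₂def
  have hd₁0 : 0 ≤ d₁ := infDist_nonneg
  have hd₂0 : 0 ≤ d₂ := hausdorffDist_nonneg
  by_cases hv0 : v = 0
  · rw [hv0, leviForm_zero hJs hr, norm_zero]
    simp
  have hN0 : 0 < N := lt_trans one_pos hN
  have hZn : ‖Z‖ < 1/(2*N) := by rwa [mem_ball, dist_zero_right] at hZb
  have h2N : 1/(2*N) ≤ 1/2 := by
    apply one_div_le_one_div_of_le <;> linarith
  have hZhalf : ‖Z‖ ≤ 1/2 := le_trans hZn.le h2N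
  have hZK : Z ∈ closedBall (0 : Fin n → ℂ) R := by
    rw [mem_closedBall_zero_iff]; linarith
  have hd₁dist : d₁ ≤ ‖Z‖ + ‖W₁‖ := by
    refine le_trans (infDist_le_dist_of_mem hW₁) ?_
    rw [dist_eq_norm]
    exact norm_sub_le Z W₁
  have hZZ₀ : ‖Z - Z₀‖ = d₁ := hdist
  have hZ₀n : ‖Z₀‖ ≤ 1 + ‖W₁‖ := by
    have h1 : ‖Z₀‖ ≤ ‖Z‖ + ‖Z - Z₀‖ := by
      calc ‖Z₀‖ = ‖Z - (Z - Z₀)‖ := (congrArg norm (sub_sub_cancel Z Z₀)).symm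
        _ ≤ ‖Z‖ + ‖Z - Z₀‖ := norm_sub_le _ _
    rw [hZZ₀] at h1
    linarith
  have hZ₀K : Z₀ ∈ closedBall (0 : Fin n → ℂ) R := by
    rw [mem_closedBall_zero_iff]; linarith
  have hvn : 0 < ‖v‖ := norm_pos_iff.2 hv0
  set u : Fin n → ℂ := ‖v‖⁻¹ • v with hudef
  have hun : ‖u‖ = 1 := by
    rw [hudef, norm_smul, norm_inv, norm_norm, inv_mul_cancel₀ hvn.ne']
  have hsmul : leviForm J r Z v = ‖v‖^2 * leviForm J r Z u := by
    conv_lhs => rw [← smul_inv_smul₀ hvn.ne' v]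
    exact leviForm_smul hJs hr Z u ‖v‖
  have huH : u ∈ Hspace J (fun W => r W + ε * ‖W‖^2 - ε/N) Z := by
    obtain ⟨h1, h2⟩ := hv
    exact ⟨by rw [hudef, map_smul, h1, smul_zero],
      by rw [hudef, map_smul, map_smul, h2, smul_zero]⟩
  have huA : u ∈ Hspace J (fun W => r W + ε * ‖W‖^2 - ε/N) Z ∩ sphere 0 1 :=
    ⟨huH, by rwa [mem_sphere_zero_iff_norm]⟩
  have hZuK : (Z, u) ∈ closedBall (0 : (Fin n → ℂ) × (Fin n → ℂ)) R := by
    rw [mem_closedBall_zero_iff, Prod.norm_def]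
    exact max_le (by linarith) (by rw [hun]; linarith)
  suffices hkey : |leviForm J r Z u| ≤ c₁ * (d₁ + d₂) by
    rw [hsmul, abs_mul, _root_.abs_of_nonneg (by positivity : (0:ℝ) ≤ ‖v‖^2)]
    calc ‖v‖^2 * |leviForm J r Z u| ≤ ‖v‖^2 * (c₁ * (d₁ + d₂)) :=
          mul_le_mul_of_nonneg_left hkey (by positivity)
      _ = c₁ * (d₁ + d₂) * ‖v‖^2 := by ring
  by_cases hB : (Hspace J r Z₀ ∩ sphere (0 : Fin n → ℂ) 1).Nonempty
  · -- Lipschitz case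
    have hHc : IsClosed (Hspace J r Z₀) := by
      have heq : Hspace J r Z₀
          = {w : Fin n → ℂ | fderiv ℝ r Z₀ w = 0}
            ∩ {w : Fin n → ℂ | fderiv ℝ r Z₀ (J Z₀ w) = 0} := rfl
      rw [heq]
      exact (isClosed_eq (fderiv ℝ r Z₀).continuous continuous_const).inter
        (isClosed_eq ((fderiv ℝ r Z₀).continuous.comp (J Z₀).continuous) continuous_const)
    have hBcomp : IsCompact (Hspace J r Z₀ ∩ sphere (0 : Fin n → ℂ) 1) :=
      (isCompact_sphere _ _).inter_left hHc
    obtain ⟨u₀, hu₀B, hu₀d⟩ := hBcomp.exists_infDist_eq_dist hB u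
    have hfin : EMetric.hausdorffEdist
        (Hspace J (fun W => r W + ε * ‖W‖^2 - ε/N) Z ∩ sphere 0 1)
        (Hspace J r Z₀ ∩ sphere (0 : Fin n → ℂ) 1) ≠ ⊤ :=
      hausdorffEdist_ne_top_of_nonempty_of_bounded ⟨u, huA⟩ hB
        (isBounded_sphere.subset Set.inter_subset_right)
        (isBounded_sphere.subset Set.inter_subset_right)
    have hduu : dist u u₀ ≤ d₂ := by
      rw [← hu₀d, hd₂def]
      exact infDist_le_hausdorffDist_of_mem huA hfin
    have hu₀n : ‖u₀‖ = 1 := mem_sphere_zero_iff_norm.1 hu₀B.2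
    have hZ₀u₀K : (Z₀, u₀) ∈ closedBall (0 : (Fin n → ℂ) × (Fin n → ℂ)) R := by
      rw [mem_closedBall_zero_iff, Prod.norm_def]
      exact max_le (by linarith) (by rw [hu₀n]; linarith)
    have hlev0 : leviForm J r Z₀ u₀ = 0 := hLevi Z₀ hZ₀ u₀ hu₀B.1
    have hld := hlip.dist_le_mul (Z, u) hZuK (Z₀, u₀) hZ₀u₀K
    have hdp : dist ((Z, u)) ((Z₀, u₀)) ≤ d₁ + d₂ := by
      rw [Prod.dist_eq]
      apply max_le
      · rw [dist_eq_norm, hZZ₀]; linarith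
      · linarith
    calc |leviForm J r Z u|
        = dist (leviForm J r Z u) (leviForm J r Z₀ u₀) := by
          rw [hlev0, dist_zero_right, Real.norm_eq_abs]
      _ ≤ (Real.toNNReal CL : ℝ) * dist ((Z, u)) ((Z₀, u₀)) := hld
      _ ≤ (Real.toNNReal CL : ℝ) * (d₁ + d₂) :=
          mul_le_mul_of_nonneg_left hdp (NNReal.coe_nonneg _)
      _ ≤ c₁ * (d₁ + d₂) := mul_le_mul_of_nonneg_right hc₁CL (by linarith)
  · rcases Nat.lt_or_ge n 2 with hn2 | hn2
    · have hn01 : n = 0 ∨ n = 1 := by omega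
      rcases hn01 with h0 | h1
      · subst h0
        exact absurd (Subsingleton.elim v 0) hv0
      · subst h1
        -- quantitative n = 1 case
        have hfr1 : Module.finrank ℝ (Fin 1 → ℂ) = 2 := by
          simp [Module.finrank_pi_fintype, Complex.finrank_real_complex]
        have hρ0 : fderiv ℝ (fun W => r W + ε * ‖W‖^2 - ε/N) Z = 0 :=
          clm_eq_zero_of_acs hfr1 (J Z) (hACS Z) _ v hv0 hv.1 hv.2
        obtain ⟨DW, hsq, hDWn⟩ := sq_norm_fderiv Z
        have hradd : HasFDerivAt (fun W : Fin 1 → ℂ => r W + ε * ‖W‖^2)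
            (fderiv ℝ r Z + ε • DW) Z :=
          HasFDerivAt.add ((hr.differentiable (by simp) Z).hasFDerivAt) (hsq.const_mul ε)
        have hρd : HasFDerivAt (fun W => r W + ε * ‖W‖^2 - ε/N)
            (fderiv ℝ r Z + ε • DW) Z := hradd.sub_const (ε/N)
        have hfrZ : fderiv ℝ r Z = -(ε • DW) := by
          have h' := hρd.fderiv
          rw [hρ0] at h'
          exact eq_neg_of_add_eq_zero_left h'.symm
        have hfrZn : ‖fderiv ℝ r Z‖ ≤ 2 * (ε/N) := by
          rw [hfrZ, norm_neg, norm_smul ε DW, Real.norm_eq_abs, _root_.abs_of_pos hε]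
          have h1 : ‖DW‖ ≤ 4 * ‖Z‖ := hDWn
          have h2 : ‖Z‖ ≤ 1/(2*N) := hZn.le
          calc ε * ‖DW‖ ≤ ε * (4 * (1/(2*N))) := by nlinarith [norm_nonneg DW]
            _ = 2 * (ε/N) := by field_simp; ring
        have hrZlb : (3/4) * (ε/N) ≤ r Z := by
          have h1 : ‖Z‖^2 ≤ 1/(4*N) := by
            have : ‖Z‖^2 ≤ (1/(2*N))^2 := by nlinarith [norm_nonneg Z]
            calc ‖Z‖^2 ≤ (1/(2*N))^2 := this
              _ = 1/(4*N^2) := by field_simp; ring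
              _ ≤ 1/(4*N) := by
                  apply one_div_le_one_div_of_le (by positivity)
                  nlinarith
          have h2 : ε * ‖Z‖^2 ≤ ε * (1/(4*N)) := by nlinarith
          have h3 : ε * (1/(4*N)) = (1/4) * (ε/N) := by field_simp
          nlinarith [hZeq]
        have hLipr : |r Z - r Z₀| ≤ Cr * d₁ := by
          have h' := (convex_closedBall (0 : Fin 1 → ℂ) R).norm_image_sub_le_of_norm_fderiv_le
            (fun x _ => hr.differentiable (by simp) x) hCr hZ₀K hZK
          rw [hZZ₀] at h'
          simpa [Real.norm_eq_abs] using h'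
        have hεN : ε/N ≤ (4/3) * (Cr * d₁) := by
          have h1 : r Z - r Z₀ ≤ Cr * d₁ := le_trans (le_abs_self _) hLipr
          rw [hZ₀] at h1
          linarith
        have hLipg : ‖fderiv ℝ r Z₀ - fderiv ℝ r Z‖ ≤ C2 * d₁ := by
          have h' := (convex_closedBall (0 : Fin 1 → ℂ) R).norm_image_sub_le_of_norm_fderiv_le
            (fun x _ => hgc.differentiable (by simp) x) hC2 hZK hZ₀K
          have hrev : ‖Z₀ - Z‖ = d₁ := by rw [← hZZ₀]; exact norm_sub_rev _ _
          rwa [hrev] at h'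
        have hδd : δ ≤ ((8/3) * Cr + C2) * d₁ := by
          have h1 : δ ≤ ‖fderiv ℝ r Z₀‖ := hW₂min ⟨hZ₀, hZ₀K⟩
          have h2 : ‖fderiv ℝ r Z₀‖ ≤ ‖fderiv ℝ r Z‖ + ‖fderiv ℝ r Z₀ - fderiv ℝ r Z‖ := by
            calc ‖fderiv ℝ r Z₀‖ = ‖fderiv ℝ r Z + (fderiv ℝ r Z₀ - fderiv ℝ r Z)‖ := by
                  rw [add_sub_cancel]
              _ ≤ _ := norm_add_le _ _
          have h3 : 2 * (ε/N) ≤ (8/3) * (Cr * d₁) := by linarith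
          linarith [hfrZn]
        have hFb : |leviForm J r Z u| ≤ M := by
          have h' := hM (Z, u) hZuK
          simpa [Real.norm_eq_abs] using h'
        have hMle : M ≤ M * ((8/3) * Cr + C2) / δ * d₁ := by
          rw [div_mul_eq_mul_div, le_div_iff₀ hδ0]
          calc M * δ ≤ M * (((8/3) * Cr + C2) * d₁) :=
                mul_le_mul_of_nonneg_left hδd hM0
            _ = M * ((8/3) * Cr + C2) * d₁ := by ring
        calc |leviForm J r Z u| ≤ M := hFb
          _ ≤ M * ((8/3) * Cr + C2) / δ * d₁ := hMle
          _ ≤ c₁ * d₁ := mul_le_mul_of_nonneg_right hc₁M hd₁0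
          _ ≤ c₁ * (d₁ + d₂) := mul_le_mul_of_nonneg_left (le_add_of_nonneg_right hd₂0) hc₁0.le
    · -- n ≥ 2 : the sphere of H(Z₀) is nonempty, contradiction
      exfalso
      have hfr : 3 ≤ Module.finrank ℝ (Fin n → ℂ) := by
        have h' : Module.finrank ℝ (Fin n → ℂ) = n * 2 := by
          simp [Module.finrank_pi_fintype, Complex.finrank_real_complex,
            Finset.sum_const, Finset.card_univ]
        omega
      obtain ⟨w, hw1, hw2, hw3⟩ := exists_unit_common_ker hfr (fderiv ℝ r Z₀)
        ((fderiv ℝ r Z₀).comp (J Z₀))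
      exact hB ⟨w, ⟨hw2, hw3⟩, mem_sphere_zero_iff_norm.2 hw1⟩
end
end
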